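/- Two-step Markov chain collapse (core of Lemma 6.2 on two-step Markov chains): let X be a finite type, M₁, M₂ : X → X → ℝ row-stochastic matrices (all entries nonnegative and every row sums to 1), r : X → ℝ a reward, and β ≥ 0 with γ = β². Define W : ℕ → X × Bool → ℝ by W 0 = 0, W (d+1) (x, false) = r x + β · ∑_y M₁ x y · W d (y, true), and W (d+1) (x, true) = β · ∑_y M₂ x y · W d (y, false); define U : ℕ → X → ℝ by U 0 = 0 and U (d+1) x = r x + γ · ∑_y (∑_z M₁ x z · M₂ z y) · U d y. Then for every d ∈ ℕ and every x ∈ X, W (2d) (x, false) = U d x; i.e., the 2d-step value of the two-step chain with discount β = √γ and rewards paid only on even steps equals the d-step value of the collapsed chain with transition matrix M₁·M₂ and discount γ. -/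
import Mathlib


/-- The `d`-step value of the two-step Markov chain: at states `(x, false)` the reward
`r x` is paid and transition matrix `M₁` applies; at intermediate states `(x, true)` no
reward is paid and transition matrix `M₂` applies; the per-step discount is `β`. -/
noncomputable def twoStepValue {X : Type*} [Fintype X]
    (M₁ M₂ : X → X → ℝ) (r : X → ℝ) (β : ℝ) : ℕ → X × Bool → ℝ
  | 0 => fun _ => 0
  | d + 1 => fun p =>
      if p.2 then β * ∑ y, M₂ p.1 y * twoStepValue M₁ M₂ r β d (y, false)
      else r p.1 + β * ∑ y, M₁ p.1 y * twoStepValue M₁ M₂ r β d (y, true)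

/-- The `d`-step value of the collapsed Markov chain with transition matrix `M₁·M₂`,
reward `r`, and discount `γ`. -/
noncomputable def collapsedValue {X : Type*} [Fintype X]
    (M₁ M₂ : X → X → ℝ) (r : X → ℝ) (γ : ℝ) : ℕ → X → ℝ
  | 0 => fun _ => 0
  | d + 1 => fun x =>
      r x + γ * ∑ y, (∑ z, M₁ x z * M₂ z y) * collapsedValue M₁ M₂ r γ d y

/-- Two-step Markov chain collapse (core of Lemma 6.2): the `2d`-step value of the
two-step chain with discount `β = √γ` and rewards paid only on even steps equals the
`d`-step value of the collapsed chain with transition matrix `M₁·M₂` and discount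
`γ = β²`. -/
theorem twoStep_collapse {X : Type*} [Fintype X]
    (M₁ M₂ : X → X → ℝ)
    (hM₁nonneg : ∀ x y, M₁ x y ≥ 0) (hM₁row : ∀ x, ∑ y, M₁ x y = 1)
    (hM₂nonneg : ∀ x y, M₂ x y ≥ 0) (hM₂row : ∀ x, ∑ y, M₂ x y = 1)
    (r : X → ℝ) (β γ : ℝ) (hβ : β ≥ 0) (hγ : γ = β ^ 2) :
    ∀ (d : ℕ) (x : X),
      twoStepValue M₁ M₂ r β (2 * d) (x, false) = collapsedValue M₁ M₂ r γ d x := by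
  intro d
  induction d with
  | zero => intro x; rfl
  | succ d ih =>
    intro x
    have h2 : 2 * (d + 1) = (2 * d + 1) + 1 := by ring
    rw [h2]
    show r x + β * ∑ y, M₁ x y * twoStepValue M₁ M₂ r β (2*d+1) (y, true) = _
    simp only [collapsedValue]
    congr 1
    have hstep : ∀ y, twoStepValue M₁ M₂ r β (2*d+1) (y, true)
        = β * ∑ z, M₂ y z * twoStepValue M₁ M₂ r β (2*d) (z, false) := fun y => rfl
    simp only [hstep, ih, Finset.mul_sum, Finset.sum_mul]
    rw [Finset.sum_comm]
    apply Finset.sum_congr rfl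
    intro a _
    apply Finset.sum_congr rfl
    intro b _
    subst hγ
    ring
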